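/- Let k ≥ 1 be an integer and G a strongly connected digraph with m arcs and Δ⁺(G) ≤ m − k. If m ≥ 3k, then the signless Laplacian spectral radius satisfies q(G) ≤ m − k + 1 + k/(m−k). -/

import Mathlib

open Matrix Finset ENNReal

/-- The outdegree of a vertex in a digraph given by its arc relation. -/
def outDeg {V : Type*} [Fintype V] (E : V → V → Prop) [DecidableRel E] (u : V) : ℕ :=
  (Finset.univ.filter (fun v => E u v)).card

/-- The maximum outdegree. -/
def maxOutDeg {V : Type*} [Fintype V] (E : V → V → Prop) [DecidableRel E] : ℕ :=
  Finset.univ.sup (outDeg E)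

/-- A simple digraph has no loops. -/
def IsSimpleDigraph {V : Type*} (E : V → V → Prop) : Prop := ∀ v, ¬ E v v

/-- Strong connectivity: every vertex reaches every other by a directed walk. -/
def StronglyConnected {V : Type*} (E : V → V → Prop) : Prop :=
  ∀ u v, Relation.ReflTransGen E u v

/-- The A_α matrix  α D + (1-α) A  of a digraph, over ℂ. -/
noncomputable def Aalpha {V : Type*} [Fintype V] [DecidableEq V] (α : ℝ)
    (E : V → V → Prop) [DecidableRel E] : Matrix V V ℂ :=
  (α : ℂ) • Matrix.diagonal (fun u => (outDeg E u : ℂ)) +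
    ((1 - α : ℝ) : ℂ) • Matrix.of (fun u v => if E u v then (1 : ℂ) else 0)

/-- The A_α spectral radius of a digraph. -/
noncomputable def lambdaAlpha {V : Type*} [Fintype V] [DecidableEq V] (α : ℝ)
    (E : V → V → Prop) [DecidableRel E] : ℝ≥0∞ :=
  spectralRadius ℂ (Aalpha α E)

/-- The signless Laplacian matrix D + A of a digraph, over ℂ. -/
noncomputable def signlessLaplacian {V : Type*} [Fintype V] [DecidableEq V]
    (E : V → V → Prop) [DecidableRel E] : Matrix V V ℂ :=
  Matrix.diagonal (fun u => (outDeg E u : ℂ)) +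
    Matrix.of (fun u v => if E u v then (1 : ℂ) else 0)

/-- The signless Laplacian spectral radius of a digraph. -/
noncomputable def qSpec {V : Type*} [Fintype V] [DecidableEq V]
    (E : V → V → Prop) [DecidableRel E] : ℝ≥0∞ :=
  spectralRadius ℂ (signlessLaplacian E)

/-!
Strong connectivity makes every outdegree `d_v` positive. Take an eigenpair `Q x = μ x` and a
vertex `u` maximising `|x_v| / d_v`. The `u`-th row of the eigen-equation gives
`|μ| d_u ≤ d_u² + Σ_{u → v} d_v`. The out-neighbours of `u` have outdegree at most `m - k` and,
together with `u` itself, carry at most `m` arcs; under `2k ≤ m` these two constraints force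
`d_u² + Σ_{u → v} d_v ≤ (m - k + 1 + k / (m - k)) d_u`.
-/

theorem spectralRadius_le_ofReal_of_forall_eigenvector {n : Type*} [Fintype n] [DecidableEq n]
    {A : Matrix n n ℂ} {r : ℝ}
    (h : ∀ (μ : ℂ) (x : n → ℂ), x ≠ 0 → A *ᵥ x = μ • x → ‖μ‖ ≤ r) :
    spectralRadius ℂ A ≤ ENNReal.ofReal r := by
  refine iSup₂_le fun μ hμ => ?_
  rw [← Matrix.spectrum_toLin'] at hμ
  obtain ⟨x, hx⟩ := (Module.End.HasEigenvalue.of_mem_spectrum hμ).exists_hasEigenvector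
  rw [← ENNReal.ofReal_coe_nnreal, coe_nnnorm]
  exact ENNReal.ofReal_le_ofReal (h μ x hx.2 (by simpa using hx.apply_eq_smul))

section Digraph

variable {V : Type*} [Fintype V] (E : V → V → Prop) [DecidableRel E]

def outNeighborFinset (u : V) : Finset V := univ.filter (E u)

theorem card_outNeighborFinset (u : V) : (outNeighborFinset E u).card = outDeg E u := rfl

theorem outDeg_le_maxOutDeg (v : V) : outDeg E v ≤ maxOutDeg E :=
  le_sup (mem_univ v)

theorem sum_outDeg_outNeighborFinset_le (u : V) :
    ∑ v ∈ outNeighborFinset E u, outDeg E v ≤ outDeg E u * maxOutDeg E :=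
  (sum_le_card_nsmul _ _ _ fun v _ => outDeg_le_maxOutDeg E v).trans_eq <| by
    rw [smul_eq_mul, card_outNeighborFinset]

variable {E}

theorem outDeg_add_sum_outDeg_outNeighborFinset_le (hsimple : IsSimpleDigraph E) (u : V) :
    outDeg E u + ∑ v ∈ outNeighborFinset E u, outDeg E v ≤ ∑ v, outDeg E v := by
  classical
  have hu : u ∉ outNeighborFinset E u := by simp [outNeighborFinset, hsimple u]
  rw [← sum_insert hu]
  exact sum_le_sum_of_subset (subset_univ _)

theorem outDeg_pos [Nontrivial V] (hsc : StronglyConnected E) (v : V) : 0 < outDeg E v := by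
  obtain ⟨w, hw⟩ := exists_ne v
  rcases (hsc v w).cases_head with h | ⟨z, hz, -⟩
  · exact absurd h.symm hw
  · exact card_pos.mpr ⟨z, by simp [hz]⟩

variable [DecidableEq V]

theorem signlessLaplacian_mulVec_apply (x : V → ℂ) (u : V) :
    (signlessLaplacian E *ᵥ x) u = outDeg E u * x u + ∑ v ∈ outNeighborFinset E u, x v := by
  simp [signlessLaplacian, mulVec, dotProduct, diagonal_apply, outNeighborFinset, sum_filter,
    add_mul, sum_add_distrib, ite_mul]

theorem norm_signlessLaplacian_mulVec_apply_le (x : V → ℂ) (u : V) :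
    ‖(signlessLaplacian E *ᵥ x) u‖ ≤ outDeg E u * ‖x u‖ + ∑ v ∈ outNeighborFinset E u, ‖x v‖ := by
  rw [signlessLaplacian_mulVec_apply]
  refine (norm_add_le _ _).trans (add_le_add ?_ (norm_sum_le _ _))
  simp

theorem signlessLaplacian_eq_zero_of_subsingleton [Subsingleton V] (hsimple : IsSimpleDigraph E) :
    signlessLaplacian E = 0 := by
  have hE : ∀ u v, ¬ E u v := fun u v => Subsingleton.elim u v ▸ hsimple u
  ext u v
  simp [signlessLaplacian, outDeg, hE]

theorem norm_le_of_signlessLaplacian_mulVec_eq_smul (hpos : ∀ v, 0 < outDeg E v) {r : ℝ}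
    (hr : ∀ u, (outDeg E u : ℝ) ^ 2 + ∑ v ∈ outNeighborFinset E u, (outDeg E v : ℝ) ≤
      r * outDeg E u)
    {μ : ℂ} {x : V → ℂ} (hx : x ≠ 0) (hμ : signlessLaplacian E *ᵥ x = μ • x) : ‖μ‖ ≤ r := by
  have hd : ∀ v, (0 : ℝ) < outDeg E v := fun v => by exact_mod_cast hpos v
  obtain ⟨v₀, hv₀⟩ := Function.ne_iff.mp hx
  have : Nonempty V := ⟨v₀⟩
  obtain ⟨u, -, hmax⟩ := exists_max_image univ (fun v => ‖x v‖ / outDeg E v) univ_nonempty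
  have hratio : ∀ v, ‖x v‖ * outDeg E u ≤ ‖x u‖ * outDeg E v := fun v => by
    simpa [div_le_div_iff₀ (hd v) (hd u)] using hmax v (mem_univ v)
  have hxu : 0 < ‖x u‖ :=
    pos_of_mul_pos_left ((mul_pos (norm_pos_iff.2 hv₀) (hd u)).trans_le (hratio v₀)) (hd v₀).le
  set d : ℝ := (outDeg E u : ℝ)
  refine le_of_mul_le_mul_right ?_ (mul_pos hxu (hd u))
  calc
    ‖μ‖ * (‖x u‖ * d) = ‖(signlessLaplacian E *ᵥ x) u‖ * d := by simp [hμ, mul_assoc]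
    _ ≤ (d * ‖x u‖ + ∑ v ∈ outNeighborFinset E u, ‖x v‖) * d :=
      mul_le_mul_of_nonneg_right (norm_signlessLaplacian_mulVec_apply_le x u) (hd u).le
    _ = d * (d * ‖x u‖) + ∑ v ∈ outNeighborFinset E u, ‖x v‖ * d := by
      rw [add_mul, sum_mul]; ring
    _ ≤ d * (d * ‖x u‖) + ∑ v ∈ outNeighborFinset E u, ‖x u‖ * outDeg E v :=
      add_le_add le_rfl (sum_le_sum fun v _ => hratio v)
    _ = ‖x u‖ * (d ^ 2 + ∑ v ∈ outNeighborFinset E u, (outDeg E v : ℝ)) := by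
      rw [← mul_sum]; ring
    _ ≤ ‖x u‖ * (r * d) := mul_le_mul_of_nonneg_left (hr u) hxu.le
    _ = r * (‖x u‖ * d) := by ring

theorem qSpec_le_of_forall_sq_add_sum_le (hpos : ∀ v, 0 < outDeg E v) {r : ℝ}
    (hr : ∀ u, (outDeg E u : ℝ) ^ 2 + ∑ v ∈ outNeighborFinset E u, (outDeg E v : ℝ) ≤
      r * outDeg E u) :
    qSpec E ≤ ENNReal.ofReal r :=
  spectralRadius_le_ofReal_of_forall_eigenvector fun _ _ hx hμ =>
    norm_le_of_signlessLaplacian_mulVec_eq_smul hpos hr hx hμ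

end Digraph

/-- For `d = 1` the bound is `s ≤ m - k`; for `2 ≤ d ≤ m - k` it reduces to
`(m - k) (d - 2) (m - k - d) + (m - k) (m - 2k) + k d ≥ 0`, which needs `s ≤ m - d`. -/
theorem sq_add_le_mul_of_le_sub {k m d s : ℕ} (h2km : 2 * k ≤ m) (hd : 0 < d) (hdm : d ≤ m - k)
    (hs : s ≤ d * (m - k)) (hsd : d + s ≤ m) :
    (d : ℝ) ^ 2 + s ≤ ((m : ℝ) - k + 1 + k / ((m : ℝ) - k)) * d := by
  have hK : (0 : ℝ) ≤ k := k.cast_nonneg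
  have hKM : 2 * (k : ℝ) ≤ m := by exact_mod_cast h2km
  have hkm : k ≤ m := by omega
  have hDM : (d : ℝ) ≤ m - k := by rw [← Nat.cast_sub hkm]; exact_mod_cast hdm
  have hSD : (d : ℝ) + s ≤ m := by exact_mod_cast hsd
  have hP : (0 : ℝ) < m - k := by linarith [show (1 : ℝ) ≤ d by exact_mod_cast hd]
  rcases (by omega : d = 1 ∨ 2 ≤ d) with rfl | hd2
  · have hS : (s : ℝ) ≤ m - k := by
      rw [← Nat.cast_sub hkm]; exact_mod_cast hs.trans_eq (one_mul _)
    have := div_nonneg hK hP.le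
    push_cast
    linarith
  · have hD2 : (2 : ℝ) ≤ d := by exact_mod_cast hd2
    rw [← mul_le_mul_iff_of_pos_left hP]
    have hdiv : ((m : ℝ) - k) * (k / (m - k)) = k := mul_div_cancel₀ _ hP.ne'
    nlinarith [mul_nonneg (mul_nonneg hP.le (sub_nonneg.2 hD2)) (sub_nonneg.2 hDM),
      mul_nonneg hK (show (0 : ℝ) ≤ d by linarith),
      mul_nonneg (by linarith : (0 : ℝ) ≤ m - k - k) hP.le]

theorem stmt_6_general {V : Type*} [Fintype V] [DecidableEq V]
    (E : V → V → Prop) [DecidableRel E]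
    (hsimple : IsSimpleDigraph E) (hsc : StronglyConnected E)
    (k m : ℕ) (hm : m = ∑ v, outDeg E v)
    (hΔ : maxOutDeg E ≤ m - k) (hmk : 3 * k ≤ m) :
    qSpec E ≤ ENNReal.ofReal
      ((m : ℝ) - k + 1 + (k : ℝ) / ((m : ℝ) - k)) := by
  rcases subsingleton_or_nontrivial V with hV | hV
  · simp [qSpec, signlessLaplacian_eq_zero_of_subsingleton hsimple]
  have hpos := outDeg_pos hsc
  refine qSpec_le_of_forall_sq_add_sum_le hpos fun u => ?_
  have hdeg : outDeg E u ≤ m - k := (outDeg_le_maxOutDeg E u).trans hΔ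
  have hsum := (sum_outDeg_outNeighborFinset_le E u).trans (Nat.mul_le_mul_left _ hΔ)
  have htotal := hm ▸ outDeg_add_sum_outDeg_outNeighborFinset_le hsimple u
  exact_mod_cast sq_add_le_mul_of_le_sub (by omega) (hpos u) hdeg hsum htotal

theorem stmt_6 {V : Type*} [Fintype V] [DecidableEq V]
    (E : V → V → Prop) [DecidableRel E]
    (hsimple : IsSimpleDigraph E) (hsc : StronglyConnected E)
    (k m : ℕ) (hk : 1 ≤ k) (hm : m = ∑ v, outDeg E v)
    (hΔ : maxOutDeg E ≤ m - k) (hmk : 3 * k ≤ m) :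
    qSpec E ≤ ENNReal.ofReal
      ((m : ℝ) - k + 1 + (k : ℝ) / ((m : ℝ) - k)) :=
  stmt_6_general E hsimple hsc k m hm hΔ hmk
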